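/- arXiv:2004.12824 — 2 statements merged into one kernel-verified Lean document; each statement's English description precedes it below -/
import Mathlib

section
/- For d ≥ 2 and W ∈ [1/d, 1], the function P_g(W,d) = (√W + √((d-1)(1-W)))²/d is monotonically decreasing in W. -/
/-!
For `d ≥ 1` we have `√((d-1)(1-W)) = √(d-1) √(1-W)`, and the inner sum
`√W + √(d-1) √(1-W)` has derivative `1/(2√W) - √(d-1)/(2√(1-W))`, which is nonpositive
exactly when `1 - W ≤ (d-1) W`, i.e. when `W ≥ 1/d`. The inner sum is nonnegative, so its
square is antitone as well.
-/

open Real Set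

lemma sqrt_one_sub_le_sqrt_sub_one_mul_sqrt {D x : ℝ} (hD : 1 ≤ D) (hx : 1 / D ≤ x) :
    √(1 - x) ≤ √(D - 1) * √x := by
  rw [← sqrt_mul (by linarith)]
  apply sqrt_le_sqrt
  have : 1 ≤ D * x := by rwa [div_le_iff₀' (by linarith)] at hx
  linarith

lemma hasDerivAt_sqrt_add_mul_sqrt_one_sub (c : ℝ) {x : ℝ} (hx₀ : 0 < x) (hx₁ : x < 1) :
    HasDerivAt (fun W => √W + c * √(1 - W)) (1 / (2 * √x) - c / (2 * √(1 - x))) x := by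
  have hsub : HasDerivAt (fun W => √(1 - W)) (-1 / (2 * √(1 - x))) x :=
    ((hasDerivAt_id x).const_sub 1).sqrt (sub_pos.2 hx₁).ne'
  exact ((hasDerivAt_sqrt hx₀.ne').fun_add (hsub.const_mul c)).congr_deriv (by ring)

lemma antitoneOn_sqrt_add_mul_sqrt_one_sub {D : ℝ} (hD : 1 ≤ D) :
    AntitoneOn (fun W => √W + √(D - 1) * √(1 - W)) (Icc (1 / D) 1) := by
  have hD₀ : 0 < D := by linarith
  refine antitoneOn_of_hasDerivWithinAt_nonpos
    (f' := fun x => 1 / (2 * √x) - √(D - 1) / (2 * √(1 - x)))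
    (convex_Icc _ _) (by fun_prop) (fun x hx => ?_) (fun x hx => ?_)
  all_goals
    rw [interior_Icc] at hx
    have hx₀ : 0 < x := lt_trans (by positivity) hx.1
  · exact (hasDerivAt_sqrt_add_mul_sqrt_one_sub _ hx₀ hx.2).hasDerivWithinAt
  · have h1x : 0 < √(1 - x) := sqrt_pos.2 (by linarith [hx.2])
    rw [sub_nonpos, div_le_div_iff₀ (by positivity) (by positivity)]
    nlinarith [sqrt_one_sub_le_sqrt_sub_one_mul_sqrt hD hx.1.le]

theorem stmt_1_general (d : ℕ) :
    AntitoneOn (fun W : ℝ => (Real.sqrt W + Real.sqrt (((d : ℝ) - 1) * (1 - W)))^2 / d)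
      (Set.Icc (1 / (d : ℝ)) 1) := by
  rcases Nat.eq_zero_or_pos d with rfl | hd
  · -- division by `0` makes the function identically `0`
    intro a _ b _ _
    simp
  have hD : (1 : ℝ) ≤ d := by exact_mod_cast hd
  intro a ha b hb hab
  have hsplit : ∀ W : ℝ, √(((d : ℝ) - 1) * (1 - W)) = √((d : ℝ) - 1) * √(1 - W) :=
    fun W => sqrt_mul (by linarith) _
  simp only [hsplit]
  gcongr ?_ ^ 2 / _
  exact antitoneOn_sqrt_add_mul_sqrt_one_sub hD ha hb hab

/-- For d ≥ 2, P_g(W,d) = (√W + √((d-1)(1-W)))²/d is monotonically decreasing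
in W on [1/d, 1]. -/
theorem stmt_1 (d : ℕ) (hd : 2 ≤ d) :
    AntitoneOn (fun W : ℝ => (Real.sqrt W + Real.sqrt (((d : ℝ) - 1) * (1 - W)))^2 / d)
      (Set.Icc (1 / (d : ℝ)) 1) :=
  stmt_1_general d
end

section
/- With S = 2/d − 1 + ((1−2W)/d)·√((d−1)/(W(1−W))) and λ₋ = −(d−1)/d − (W/d)·√((d−1)/(W(1−W))), the dual objective −λ₋ + S·W equals (√W + √((d−1)(1−W)))²/d, for all W ∈ (0,1) and integers d ≥ 2. -/
lemma Real.mul_sqrt_div_self {x : ℝ} (hx : 0 ≤ x) (y : ℝ) : x * √(y / x) = √(x * y) := by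
  rw [Real.sqrt_div' y hx, ← mul_div_assoc, mul_div_right_comm, Real.div_sqrt, Real.sqrt_mul hx]

/-- With S = 2/d − 1 + ((1−2W)/d)√((d−1)/(W(1−W))) and
λ₋ = −(d−1)/d − (W/d)√((d−1)/(W(1−W))), the dual objective −λ₋ + S·W equals
(√W + √((d−1)(1−W)))²/d, for all W ∈ (0,1) and integers d ≥ 2. -/
theorem stmt_5 (d : ℕ) (hd : 2 ≤ d) (W : ℝ) (hW0 : 0 < W) (hW1 : W < 1) :
    -(-(((d : ℝ) - 1) / d) - (W / d) * Real.sqrt (((d : ℝ) - 1) / (W * (1 - W)))) +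
        (2 / (d : ℝ) - 1 + ((1 - 2 * W) / d) * Real.sqrt (((d : ℝ) - 1) / (W * (1 - W)))) * W =
      (Real.sqrt W + Real.sqrt (((d : ℝ) - 1) * (1 - W)))^2 / d := by
  have hd1 : (0 : ℝ) ≤ d - 1 := by
    have : (2 : ℝ) ≤ d := by exact_mod_cast hd
    linarith
  have hd0 : (d : ℝ) ≠ 0 := by positivity
  have h1W : (0 : ℝ) ≤ 1 - W := by linarith
  -- the coefficient of `√((d-1)/(W(1-W)))` on the left collects to `2W(1-W)/d`
  have hcross : W * (1 - W) * √((d - 1) / (W * (1 - W))) = √W * √((d - 1) * (1 - W)) := by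
    rw [Real.mul_sqrt_div_self (mul_nonneg hW0.le h1W), ← Real.sqrt_mul hW0.le]
    ring_nf
  have hsqW : √W ^ 2 = W := Real.sq_sqrt hW0.le
  have hsqB : √((d - 1) * (1 - W)) ^ 2 = (d - 1) * (1 - W) := Real.sq_sqrt (mul_nonneg hd1 h1W)
  field_simp
  linear_combination 2 * hcross - hsqW - hsqB
end
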